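/- arXiv:1808.02689 — 3 statements merged into one kernel-verified Lean document; each statement's English description precedes it below -/
import Mathlib

section
/- Let K = (1/T)((ln λ) I + ∑_{k=1}^{m-1} ((-1)^{k+1}/k)(ε')^k N^k) ∈ ℝ^{m×m} with λ > 0, T > 0, 0 < ε' ≤ 1/2, and N the nilpotent shift matrix. Then for all w ∈ ℂ^m: (1/2) w^*(K^* + K) w ≤ ((ln λ)/T + (2ε')/T) ‖w‖². -/
/-!
For a real matrix `M`, `realQuad w M = Re (w^* M w)` is linear in `M` and unchanged by
transposition, so the left-hand side is `realQuad w K`, and `realQuad w 1 = ‖w‖²`. Bounding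
`|Re (w̄ᵢ wⱼ)| ≤ (|wᵢ|² + |wⱼ|²)/2` entrywise gives the Schur-test estimate
`|realQuad w M| ≤ (‖M‖_∞ + ‖Mᵀ‖_∞)/2 · ‖w‖²`. The shift `N` and its transpose have at most one
unit entry per row, so by submultiplicativity of the `∞`-operator norm `|realQuad w (N^k)| ≤ ‖w‖²`.
The `k`-th coefficient is at most `ε'^k` in absolute value, and `∑_{k ≥ 1} ε'^k ≤ 2ε'` for
`ε' ≤ 1/2`.
-/

open Matrix

def shiftMatrix (m : ℕ) : Matrix (Fin m) (Fin m) ℝ :=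
  Matrix.of fun i j => if (i : ℕ) + 1 = (j : ℕ) then 1 else 0

section LinftyOp

attribute [local instance] Matrix.linftyOpSeminormedAddCommGroup
  Matrix.linftyOpNormedAddCommGroup Matrix.linftyOpNormedRing

namespace Matrix

variable {n : Type*} [Fintype n]

noncomputable def realQuad (w : n → ℂ) : Matrix n n ℝ →ₗ[ℝ] ℝ where
  toFun M := ∑ i, ∑ j, M i j * (star (w i) * w j).re
  map_add' A B := by simp only [add_apply, add_mul, Finset.sum_add_distrib]
  map_smul' c A := by
    simp only [smul_apply, smul_eq_mul, mul_assoc, Finset.mul_sum, RingHom.id_apply]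

theorem realQuad_apply (w : n → ℂ) (M : Matrix n n ℝ) :
    realQuad w M = ∑ i, ∑ j, M i j * (star (w i) * w j).re := rfl

theorem realQuad_eq_re_dotProduct (w : n → ℂ) (M : Matrix n n ℝ) :
    realQuad w M = (star w ⬝ᵥ (M.map Complex.ofReal *ᵥ w)).re := by
  simp only [realQuad_apply, dotProduct, mulVec, Finset.mul_sum, Complex.re_sum, Pi.star_apply,
    map_apply]
  refine Finset.sum_congr rfl fun i _ => Finset.sum_congr rfl fun j _ => ?_
  rw [mul_left_comm, Complex.re_ofReal_mul]

theorem realQuad_transpose (w : n → ℂ) (M : Matrix n n ℝ) :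
    realQuad w Mᵀ = realQuad w M := by
  rw [realQuad_apply, realQuad_apply, Finset.sum_comm]
  refine Finset.sum_congr rfl fun i _ => Finset.sum_congr rfl fun j _ => ?_
  rw [transpose_apply]
  congr 1
  simp only [Complex.star_def, Complex.mul_re, Complex.conj_re, Complex.conj_im]
  ring

theorem realQuad_one [DecidableEq n] (w : n → ℂ) : realQuad w 1 = ∑ i, ‖w i‖ ^ 2 := by
  simp [realQuad_apply, one_apply, Complex.sq_norm, Complex.normSq_apply]

theorem re_dotProduct_hermitianPart (w : n → ℂ) (M : Matrix n n ℝ) :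
    (1 / 2 : ℝ) * (star w ⬝ᵥ (((M.map Complex.ofReal)ᴴ + M.map Complex.ofReal) *ᵥ w)).re =
      realQuad w M := by
  rw [← conjTranspose_map _ fun x => (Complex.conj_ofReal x).symm,
    conjTranspose_eq_transpose_of_trivial, add_mulVec, dotProduct_add, Complex.add_re,
    ← realQuad_eq_re_dotProduct, ← realQuad_eq_re_dotProduct, realQuad_transpose]
  ring

theorem sum_norm_row_le_linfty_opNorm {m α : Type*} [Fintype m] [SeminormedAddCommGroup α]
    (A : Matrix m n α) (i : m) :
    ∑ j, ‖A i j‖ ≤ ‖A‖ := by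
  rw [linfty_opNorm_def]
  simpa only [NNReal.coe_sum, coe_nnnorm] using
    NNReal.coe_le_coe.mpr (Finset.le_sup (f := fun i => ∑ j, ‖A i j‖₊) (Finset.mem_univ i))

theorem abs_realQuad_le (w : n → ℂ) (M : Matrix n n ℝ) :
    |realQuad w M| ≤ (‖M‖ + ‖Mᵀ‖) / 2 * ∑ i, ‖w i‖ ^ 2 := by
  have hentry : ∀ i j, |M i j * (star (w i) * w j).re| ≤
      |M i j| * ‖w i‖ ^ 2 / 2 + |M i j| * ‖w j‖ ^ 2 / 2 := by
    intro i j
    have h : |(star (w i) * w j).re| ≤ ‖w i‖ * ‖w j‖ := by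
      simpa only [norm_mul, norm_star] using Complex.abs_re_le_norm (star (w i) * w j)
    rw [abs_mul]
    nlinarith [two_mul_le_add_sq ‖w i‖ ‖w j‖, abs_nonneg (M i j)]
  calc |realQuad w M| ≤ ∑ i, ∑ j, (|M i j| * ‖w i‖ ^ 2 / 2 + |M i j| * ‖w j‖ ^ 2 / 2) := by
        refine (Finset.abs_sum_le_sum_abs _ _).trans (Finset.sum_le_sum fun i _ => ?_)
        exact (Finset.abs_sum_le_sum_abs _ _).trans (Finset.sum_le_sum fun j _ => hentry i j)
    _ = (∑ i, (∑ j, ‖M i j‖) * ‖w i‖ ^ 2 + ∑ j, (∑ i, ‖Mᵀ j i‖) * ‖w j‖ ^ 2) / 2 := by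
        simp only [Finset.sum_add_distrib, Finset.sum_mul, Real.norm_eq_abs, transpose_apply]
        rw [Finset.sum_comm (f := fun i j => |M i j| * ‖w j‖ ^ 2 / 2)]
        simp only [add_div, Finset.sum_div]
    _ ≤ (∑ i, ‖M‖ * ‖w i‖ ^ 2 + ∑ j, ‖Mᵀ‖ * ‖w j‖ ^ 2) / 2 := by
        gcongr with i _ j _
        · exact sum_norm_row_le_linfty_opNorm M i
        · exact sum_norm_row_le_linfty_opNorm Mᵀ j
    _ = (‖M‖ + ‖Mᵀ‖) / 2 * ∑ i, ‖w i‖ ^ 2 := by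
        rw [← Finset.mul_sum, ← Finset.mul_sum]; ring

theorem linfty_opNorm_of_boole_le_one {m : Type*} [Fintype m] (r : m → n → Prop)
    [∀ i j, Decidable (r i j)]
    (hr : ∀ i j j', r i j → r i j' → j = j') :
    ‖(of fun i j => if r i j then 1 else 0 : Matrix m n ℝ)‖ ≤ 1 := by
  rw [linfty_opNorm_def, NNReal.coe_le_one]
  refine Finset.sup_le fun i _ => ?_
  simp only [of_apply, apply_ite, nnnorm_one, nnnorm_zero]
  rw [Finset.sum_boole]
  exact_mod_cast Finset.card_le_one.mpr fun j hj j' hj' =>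
    hr i j j' (Finset.mem_filter.mp hj).2 (Finset.mem_filter.mp hj').2

theorem abs_realQuad_pow_le [DecidableEq n] {A : Matrix n n ℝ} (hA : ‖A‖ ≤ 1) (hAt : ‖Aᵀ‖ ≤ 1)
    {k : ℕ} (hk : 0 < k) (w : n → ℂ) : |realQuad w (A ^ k)| ≤ ∑ i, ‖w i‖ ^ 2 := by
  have hpow : ‖A ^ k‖ ≤ 1 := (norm_pow_le' A hk).trans (pow_le_one₀ (norm_nonneg A) hA)
  have hpow_transpose : ‖(A ^ k)ᵀ‖ ≤ 1 := by
    rw [transpose_pow]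
    exact (norm_pow_le' Aᵀ hk).trans (pow_le_one₀ (norm_nonneg Aᵀ) hAt)
  calc |realQuad w (A ^ k)| ≤ (‖A ^ k‖ + ‖(A ^ k)ᵀ‖) / 2 * ∑ i, ‖w i‖ ^ 2 :=
        abs_realQuad_le w _
    _ ≤ (1 + 1) / 2 * ∑ i, ‖w i‖ ^ 2 := by gcongr
    _ = ∑ i, ‖w i‖ ^ 2 := by ring

end Matrix

theorem shiftMatrix_linfty_opNorm_le_one (m : ℕ) : ‖shiftMatrix m‖ ≤ 1 :=
  linfty_opNorm_of_boole_le_one _ fun _ _ _ h h' => Fin.ext (h.symm.trans h')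

theorem shiftMatrix_transpose_linfty_opNorm_le_one (m : ℕ) : ‖(shiftMatrix m)ᵀ‖ ≤ 1 :=
  linfty_opNorm_of_boole_le_one (fun i j : Fin m => (j : ℕ) + 1 = i) fun _ _ _ h h' =>
    Fin.ext (by omega)

theorem abs_realQuad_shiftMatrix_pow_le {m k : ℕ} (hk : 0 < k) (w : Fin m → ℂ) :
    |realQuad w (shiftMatrix m ^ k)| ≤ ∑ i, ‖w i‖ ^ 2 :=
  abs_realQuad_pow_le (shiftMatrix_linfty_opNorm_le_one m)
    (shiftMatrix_transpose_linfty_opNorm_le_one m) hk w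

end LinftyOp

theorem sum_Icc_pow_le_two_mul {x : ℝ} (hx0 : 0 ≤ x) (hx : x ≤ 1 / 2) (n : ℕ) :
    ∑ k ∈ Finset.Icc 1 n, x ^ k ≤ 2 * x := by
  calc ∑ k ∈ Finset.Icc 1 n, x ^ k ≤ x ^ 1 / (1 - x) := by
        rw [← Finset.Ico_add_one_right_eq_Icc]
        exact geom_sum_Ico_le_of_lt_one hx0 (by linarith)
    _ ≤ 2 * x := by
        rw [pow_one, div_le_iff₀ (by linarith)]; nlinarith

theorem sum_logCoeff_mul_realQuad_shiftMatrix_pow_le {m : ℕ} (w : Fin m → ℂ) {ε : ℝ}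
    (hε0 : 0 ≤ ε) (hε : ε ≤ 1 / 2) (n : ℕ) :
    ∑ k ∈ Finset.Icc 1 n, (-1 : ℝ) ^ (k + 1) / k * ε ^ k * realQuad w (shiftMatrix m ^ k) ≤
      2 * ε * ∑ i, ‖w i‖ ^ 2 := by
  calc ∑ k ∈ Finset.Icc 1 n, (-1 : ℝ) ^ (k + 1) / k * ε ^ k * realQuad w (shiftMatrix m ^ k)
      ≤ ∑ k ∈ Finset.Icc 1 n, ε ^ k * ∑ i, ‖w i‖ ^ 2 := by
        refine Finset.sum_le_sum fun k hk => ?_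
        have hk1 : 1 ≤ k := (Finset.mem_Icc.mp hk).1
        have hcoeff : |(-1 : ℝ) ^ (k + 1) / k * ε ^ k| ≤ ε ^ k := by
          rw [abs_mul, abs_div, abs_pow, abs_neg, abs_one, one_pow, Nat.abs_cast,
            abs_of_nonneg (pow_nonneg hε0 k)]
          exact mul_le_of_le_one_left (pow_nonneg hε0 k)
            (div_le_one_of_le₀ (by exact_mod_cast hk1) (Nat.cast_nonneg k))
        exact (le_abs_self _).trans <| (abs_mul _ _).trans_le <|
          mul_le_mul hcoeff (abs_realQuad_shiftMatrix_pow_le hk1 w) (abs_nonneg _)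
            (pow_nonneg hε0 k)
    _ = (∑ k ∈ Finset.Icc 1 n, ε ^ k) * ∑ i, ‖w i‖ ^ 2 := (Finset.sum_mul _ _ _).symm
    _ ≤ 2 * ε * ∑ i, ‖w i‖ ^ 2 := by
        gcongr
        exact sum_Icc_pow_le_two_mul hε0 hε n

theorem hermitian_part_bound_jordan_block_pos_general (m : ℕ) (lam T ε' : ℝ)
    (hT : 0 < T) (hε'0 : 0 < ε') (hε' : ε' ≤ 1 / 2)
    (K : Matrix (Fin m) (Fin m) ℝ)
    (hK : K = (1 / T) • ((Real.log lam) • (1 : Matrix (Fin m) (Fin m) ℝ) +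
      ∑ k ∈ Finset.Icc 1 (m - 1), ((-1 : ℝ) ^ (k + 1) / (k : ℝ) * ε' ^ k) • shiftMatrix m ^ k)) :
    ∀ w : Fin m → ℂ,
      (1 / 2 : ℝ) * (star w ⬝ᵥ (((K.map Complex.ofReal)ᴴ + K.map Complex.ofReal) *ᵥ w)).re ≤
        (Real.log lam / T + 2 * ε' / T) * ∑ i, ‖w i‖ ^ 2 := by
  intro w
  have hshift := sum_logCoeff_mul_realQuad_shiftMatrix_pow_le w hε'0.le hε' (m - 1)
  rw [re_dotProduct_hermitianPart, hK]
  simp only [map_smul, map_add, map_sum, realQuad_one, smul_eq_mul]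
  calc _ ≤ 1 / T * (Real.log lam * ∑ i, ‖w i‖ ^ 2 + 2 * ε' * ∑ i, ‖w i‖ ^ 2) := by gcongr
    _ = (Real.log lam / T + 2 * ε' / T) * ∑ i, ‖w i‖ ^ 2 := by ring

/-- For `K = (1/T)((ln λ) I + ∑_{k=1}^{m-1} ((-1)^{k+1}/k)(ε')^k N^k)` with `λ > 0`,
`T > 0`, `0 < ε' ≤ 1/2`, we have `(1/2) w^*(K^* + K) w ≤ ((ln λ)/T + 2ε'/T) ‖w‖²`
for all complex vectors `w`. -/
theorem hermitian_part_bound_jordan_block_pos (m : ℕ) (lam T ε' : ℝ)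
    (hlam : 0 < lam) (hT : 0 < T) (hε'0 : 0 < ε') (hε' : ε' ≤ 1 / 2)
    (K : Matrix (Fin m) (Fin m) ℝ)
    (hK : K = (1 / T) • ((Real.log lam) • (1 : Matrix (Fin m) (Fin m) ℝ) +
      ∑ k ∈ Finset.Icc 1 (m - 1), ((-1 : ℝ) ^ (k + 1) / (k : ℝ) * ε' ^ k) • shiftMatrix m ^ k)) :
    ∀ w : Fin m → ℂ,
      (1 / 2 : ℝ) * (star w ⬝ᵥ (((K.map Complex.ofReal)ᴴ + K.map Complex.ofReal) *ᵥ w)).re ≤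
        (Real.log lam / T + 2 * ε' / T) * ∑ i, ‖w i‖ ^ 2 :=
  hermitian_part_bound_jordan_block_pos_general m lam T ε' hT hε'0 hε' K hK
end

section
/- Let P(t) be differentiable and invertible with (P^{-1})'(t) = -P(t)^{-1} F(t) + B P(t)^{-1}, and set M₀(t) = (P(t)^{-1})^* S^{-*} S^{-1} P(t)^{-1} for an invertible matrix S. Then M₀(t) F(t) + F(t)^T M₀(t) + M₀'(t) = (P(t)^{-1})^* (B^* S^{-*}S^{-1} + S^{-*}S^{-1} B) P(t)^{-1}. -/
/-! Writing `Q = P⁻¹` and `C = S⁻ᴴ S⁻¹`, we have `M₀ = Qᴴ C Q`, so the product rule gives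
`M₀' = Q'ᴴ C Q + Qᴴ C Q'`. Substituting `Q' = -Q F + B Q`, the terms in `F` cancel exactly against
`M₀ F + Fᵀ M₀` (as `F` is real, `Fᵀ = Fᴴ`), leaving `Qᴴ (Bᴴ C + C B) Q`. -/

open Matrix

def Matrix.HasEntrywiseDerivAt {𝕜 𝔸 : Type*} [NontriviallyNormedField 𝕜] [NormedAddCommGroup 𝔸]
    [NormedSpace 𝕜 𝔸] {m n : Type*} (A : 𝕜 → Matrix m n 𝔸) (A' : Matrix m n 𝔸) (x : 𝕜) : Prop :=
  ∀ i j, HasDerivAt (fun s => A s i j) (A' i j) x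

namespace Matrix.HasEntrywiseDerivAt

variable {𝕜 : Type*} [NontriviallyNormedField 𝕜] {m n p : Type*} {x : 𝕜}

section Module

variable {𝔸 : Type*} [NormedAddCommGroup 𝔸] [NormedSpace 𝕜 𝔸]

theorem const (C : Matrix m n 𝔸) : HasEntrywiseDerivAt (fun _ => C) 0 x :=
  fun _ _ => hasDerivAt_const x _

theorem unique {A : 𝕜 → Matrix m n 𝔸} {A₁ A₂ : Matrix m n 𝔸}
    (h₁ : HasEntrywiseDerivAt A A₁ x) (h₂ : HasEntrywiseDerivAt A A₂ x) : A₁ = A₂ :=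
  Matrix.ext fun i j => (h₁ i j).unique (h₂ i j)

theorem conjTranspose [StarRing 𝕜] [TrivialStar 𝕜] [StarAddMonoid 𝔸] [StarModule 𝕜 𝔸]
    [ContinuousStar 𝔸] {A : 𝕜 → Matrix m n 𝔸} {A' : Matrix m n 𝔸}
    (hA : HasEntrywiseDerivAt A A' x) : HasEntrywiseDerivAt (fun s => (A s)ᴴ) A'ᴴ x :=
  fun i j => (hA j i).star

end Module

variable {𝔸 : Type*} [NormedRing 𝔸] [NormedAlgebra 𝕜 𝔸] [Fintype n]

theorem mul {A : 𝕜 → Matrix m n 𝔸} {B : 𝕜 → Matrix n p 𝔸} {A' : Matrix m n 𝔸}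
    {B' : Matrix n p 𝔸} (hA : HasEntrywiseDerivAt A A' x) (hB : HasEntrywiseDerivAt B B' x) :
    HasEntrywiseDerivAt (fun s => A s * B s) (A' * B x + A x * B') x := by
  intro i k
  simp only [mul_apply, add_apply, ← Finset.sum_add_distrib]
  exact HasDerivAt.fun_sum fun j _ => (hA i j).mul (hB j k)

end Matrix.HasEntrywiseDerivAt

theorem Matrix.map_ofReal_transpose {m n : Type*} (F : Matrix m n ℝ) :
    Fᵀ.map Complex.ofReal = (F.map Complex.ofReal)ᴴ := by
  rw [← conjTranspose_eq_transpose_of_trivial, conjTranspose_map]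
  exact fun r => (Complex.conj_ofReal r).symm

theorem Matrix.lyapunov_derivative_identity {n R : Type*} [Fintype n] [CommRing R] [StarRing R]
    (Q F B C : Matrix n n R) :
    Qᴴ * C * Q * F + Fᴴ * (Qᴴ * C * Q)
      + ((-Q * F + B * Q)ᴴ * C * Q + Qᴴ * C * (-Q * F + B * Q)) =
      Qᴴ * (Bᴴ * C + C * B) * Q := by
  simp only [conjTranspose_add, conjTranspose_mul, conjTranspose_neg]
  noncomm_ring

theorem contraction_identity_periodic_general (n : ℕ)
    (F : ℝ → Matrix (Fin n) (Fin n) ℝ)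
    (B : Matrix (Fin n) (Fin n) ℂ)
    (S : Matrix (Fin n) (Fin n) ℂ)
    (P : ℝ → Matrix (Fin n) (Fin n) ℂ)
    (hP' : ∀ (t : ℝ) (i j : Fin n),
      HasDerivAt (fun s => (P s)⁻¹ i j)
        ((-(P t)⁻¹ * (F t).map Complex.ofReal + B * (P t)⁻¹) i j) t)
    (M₀ M₀' : ℝ → Matrix (Fin n) (Fin n) ℂ)
    (hM₀ : ∀ t : ℝ, M₀ t = ((P t)⁻¹)ᴴ * (S⁻¹)ᴴ * S⁻¹ * (P t)⁻¹)
    (hM₀' : ∀ (t : ℝ) (i j : Fin n),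
      HasDerivAt (fun s => M₀ s i j) (M₀' t i j) t) :
    ∀ t : ℝ,
      M₀ t * (F t).map Complex.ofReal + ((F t)ᵀ).map Complex.ofReal * M₀ t + M₀' t =
        ((P t)⁻¹)ᴴ * (Bᴴ * (S⁻¹)ᴴ * S⁻¹ + (S⁻¹)ᴴ * S⁻¹ * B) * (P t)⁻¹ := by
  intro t
  set C := (S⁻¹)ᴴ * S⁻¹
  set Q := (P t)⁻¹
  set Q' := -Q * (F t).map Complex.ofReal + B * Q
  have hM₀C : M₀ = fun s => ((P s)⁻¹)ᴴ * C * (P s)⁻¹ := funext fun s => by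
    rw [hM₀ s, Matrix.mul_assoc _ (S⁻¹)ᴴ]
  have hQ : HasEntrywiseDerivAt (fun s => (P s)⁻¹) Q' t := hP' t
  have hM : HasEntrywiseDerivAt M₀ ((Q'ᴴ * C + Qᴴ * 0) * Q + Qᴴ * C * Q') t := by
    rw [hM₀C]
    exact (hQ.conjTranspose.mul (.const C)).mul hQ
  have hM' : HasEntrywiseDerivAt M₀ (M₀' t) t := hM₀' t
  rw [hM'.unique hM, hM₀C, map_ofReal_transpose,
    Matrix.mul_assoc Bᴴ, ← lyapunov_derivative_identity, Matrix.mul_zero, add_zero]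

/-- Key algebraic identity: with `(P⁻¹)'(t) = -P(t)⁻¹ F(t) + B P(t)⁻¹` and
`M₀(t) = (P(t)⁻¹)^* (S⁻¹)^* S⁻¹ P(t)⁻¹`, one has
`M₀ F + Fᵀ M₀ + M₀' = (P⁻¹)^* (B^* (S⁻¹)^* S⁻¹ + (S⁻¹)^* S⁻¹ B) P⁻¹`. -/
theorem contraction_identity_periodic (n : ℕ)
    (F : ℝ → Matrix (Fin n) (Fin n) ℝ)
    (B : Matrix (Fin n) (Fin n) ℂ)
    (S : Matrix (Fin n) (Fin n) ℂ) (hS : IsUnit S)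
    (P : ℝ → Matrix (Fin n) (Fin n) ℂ)
    (hP : ∀ t : ℝ, IsUnit (P t))
    (hP' : ∀ (t : ℝ) (i j : Fin n),
      HasDerivAt (fun s => (P s)⁻¹ i j)
        ((-(P t)⁻¹ * (F t).map Complex.ofReal + B * (P t)⁻¹) i j) t)
    (M₀ M₀' : ℝ → Matrix (Fin n) (Fin n) ℂ)
    (hM₀ : ∀ t : ℝ, M₀ t = ((P t)⁻¹)ᴴ * (S⁻¹)ᴴ * S⁻¹ * (P t)⁻¹)
    (hM₀' : ∀ (t : ℝ) (i j : Fin n),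
      HasDerivAt (fun s => M₀ s i j) (M₀' t i j) t) :
    ∀ t : ℝ,
      M₀ t * (F t).map Complex.ofReal + ((F t)ᵀ).map Complex.ofReal * M₀ t + M₀' t =
        ((P t)⁻¹)ᴴ * (Bᴴ * (S⁻¹)ᴴ * S⁻¹ + (S⁻¹)ᴴ * S⁻¹ * B) * (P t)⁻¹ :=
  contraction_identity_periodic_general n F B S P hP' M₀ M₀' hM₀ hM₀'
end

section
/- Let K = (1/T)((ln r) I_{2m} + blockdiag(Θ,…,Θ) + ∑_{k=1}^{2m-2}((-1)^{k+1}/k)(ε')^k 𝒩^k), where Θ = [[0,-θ],[θ,0]], r > 0, and 𝒩 is the real nilpotent matrix with 2×2 blocks R(θ)^{-1} (R(θ) the rotation by θ scaled by 1) on its block superdiagonal. Then exp(KT) = 𝓡 (I + ε' 𝒩), where 𝓡 = blockdiag(r R(θ), …, r R(θ)) with R(θ) = [[cos θ, −sin θ],[sin θ, cos θ]]. -/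
open NormedSpace Matrix

/-- The rotation matrix `R(θ) = [[cos θ, -sin θ],[sin θ, cos θ]]`. -/
noncomputable def rotMat (θ : ℝ) : Matrix (Fin 2) (Fin 2) ℝ :=
  !![Real.cos θ, -Real.sin θ; Real.sin θ, Real.cos θ]

/-- The block-diagonal `2m × 2m` matrix with `m` copies of a `2 × 2` block `A`. -/
def blockDiag2 (m : ℕ) (A : Matrix (Fin 2) (Fin 2) ℝ) :
    Matrix (Fin m × Fin 2) (Fin m × Fin 2) ℝ :=
  Matrix.of fun p q => if p.1 = q.1 then A p.2 q.2 else 0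

/-- The `2m × 2m` matrix with `2 × 2` blocks `A` on the block superdiagonal. -/
def blockSuperDiag2 (m : ℕ) (A : Matrix (Fin 2) (Fin 2) ℝ) :
    Matrix (Fin m × Fin 2) (Fin m × Fin 2) ℝ :=
  Matrix.of fun p q => if (p.1 : ℕ) + 1 = (q.1 : ℕ) then A p.2 q.2 else 0

/-!
The matrix `G = (ln r) I + Θ` is the image of `ln r + iθ` under the regular representation
`ℂ → M₂(ℝ)`, so `exp G = r R(θ)`, and `G` commutes with every rotation, in particular with
`R(θ)⁻¹ = R(-θ)`. Hence `blockdiag(G, …, G)` commutes with `𝒩`, and `exp (K T)` splits as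
`blockdiag(exp G, …) * exp (L (ε' 𝒩))`, where `L` is the Taylor polynomial of `log (1 + x)` of
degree `2m - 2`. Since `𝒩 ^ m = 0`, the truncation is harmless: for `y ^ (M + 1) = 0`,
`t ↦ exp (-L (t y)) * (1 + t y)` has derivative `exp (-L (t y)) * (y - L'(t y) (1 + t y)) = 0`,
because `L'(x) (1 + x) = 1 - (-x) ^ M` and the error term is killed by `y ^ (M + 1) = 0`.
-/

open Finset Kronecker

section LogTaylor

variable {B : Type*} [Ring B] [Algebra ℝ B]

noncomputable def logTaylor (M : ℕ) (y : B) : B :=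
  ∑ k ∈ Icc 1 M, ((-1 : ℝ) ^ (k + 1) / k) • y ^ k

theorem logTaylor_smul (M : ℕ) (t : ℝ) (y : B) :
    logTaylor M (t • y) = ∑ k ∈ Icc 1 M, ((-1 : ℝ) ^ (k + 1) / k * t ^ k) • y ^ k := by
  simp only [logTaylor, smul_pow, smul_smul]

theorem logTaylor_zero (M : ℕ) : logTaylor M (0 : B) = 0 :=
  sum_eq_zero fun k hk => by rw [zero_pow (by rw [mem_Icc] at hk; omega), smul_zero]

theorem map_logTaylor {C F : Type*} [Ring C] [Algebra ℝ C] [FunLike F B C]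
    [AlgHomClass F ℝ B C] (f : F) (M : ℕ) (y : B) :
    f (logTaylor M y) = logTaylor M (f y) := by
  simp only [logTaylor, map_sum, map_smul, map_pow]

theorem Commute.logTaylor_right {x y : B} (h : Commute x y) (M : ℕ) :
    Commute x (logTaylor M y) :=
  Commute.sum_right _ _ _ fun k _ => (h.pow_right k).smul_right _

end LogTaylor

section ExpLogTaylor

variable {B : Type*} [NormedRing B] [NormedAlgebra ℝ B]

theorem hasDerivAt_logTaylor_smul (M : ℕ) (y : B) (s : ℝ) :
    HasDerivAt (fun t : ℝ => logTaylor M (t • y)) (y * ∑ i ∈ range M, (-(s • y)) ^ i) s := by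
  simp_rw [logTaylor_smul, ← Ico_add_one_right_eq_Icc, sum_Ico_eq_sum_range, Nat.add_sub_cancel,
    mul_sum]
  refine HasDerivAt.fun_sum fun i _ => ?_
  convert ((hasDerivAt_pow (1 + i) s).const_mul ((-1 : ℝ) ^ (1 + i + 1) / ↑(1 + i))).smul_const
    (y ^ (1 + i)) using 1
  rw [← neg_smul, smul_pow, mul_smul_comm, ← pow_succ', add_comm i 1, neg_pow]
  congr 1
  rw [Nat.add_sub_cancel_left]
  push_cast
  field_simp
  ring

theorem logTaylor_deriv_mul_one_add {M : ℕ} {y : B} (hy : y ^ (M + 1) = 0) (s : ℝ) :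
    (y * ∑ i ∈ range M, (-(s • y)) ^ i) * (1 + s • y) = y := by
  rw [mul_assoc, ← sub_neg_eq_add, geom_sum_mul_neg, mul_sub, mul_one, ← neg_smul, smul_pow,
    mul_smul_comm, ← pow_succ', hy, smul_zero, sub_zero]

theorem exp_logTaylor_of_pow_eq_zero_of_comm {𝔸 : Type*} [NormedCommRing 𝔸] [NormedAlgebra ℝ 𝔸]
    [CompleteSpace 𝔸] {M : ℕ} {y : 𝔸} (hy : y ^ (M + 1) = 0) :
    exp (logTaylor M y) = 1 + y := by
  let g : ℝ → 𝔸 := fun t => exp (-logTaylor M (t • y)) * (1 + t • y)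
  have hg : ∀ t, HasDerivAt g 0 t := by
    intro t
    have hexp : HasDerivAt (fun t => exp (-logTaylor M (t • y)))
        (exp (-logTaylor M (t • y)) * -(y * ∑ i ∈ range M, (-(t • y)) ^ i)) t := by
      exact HasFDerivAt.comp_hasDerivAt t (hasFDerivAt_exp (𝕂 := ℝ))
        (hasDerivAt_logTaylor_smul M y t).fun_neg
    have hlin : HasDerivAt (fun t : ℝ => 1 + t • y) y t := by
      simpa using ((hasDerivAt_id t).smul_const y).const_add (1 : 𝔸)
    convert hexp.fun_mul hlin using 1
    rw [mul_neg, neg_mul, mul_assoc, logTaylor_deriv_mul_one_add hy, neg_add_cancel]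
  have hg_one : g 1 = g 0 :=
    is_const_of_deriv_eq_zero (fun t => (hg t).differentiableAt) (fun t => (hg t).deriv) 1 0
  simp only [g, one_smul, zero_smul, logTaylor_zero, neg_zero, exp_zero, add_zero, mul_one]
    at hg_one
  let _ : NormedAlgebra ℚ 𝔸 := NormedAlgebra.restrictScalars ℚ ℝ 𝔸
  calc exp (logTaylor M y) = exp (logTaylor M y) * (exp (-logTaylor M y) * (1 + y)) := by
        rw [hg_one, mul_one]
    _ = 1 + y := by rw [← mul_assoc, ← exp_add, add_neg_cancel, exp_zero, one_mul]

-- Pass to the closed commutative subalgebra generated by `y`, where `exp` has derivative `exp`.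
theorem exp_logTaylor_of_pow_eq_zero [CompleteSpace B] {M : ℕ} {y : B} (hy : y ^ (M + 1) = 0) :
    exp (logTaylor M y) = 1 + y := by
  let S := Algebra.elemental ℝ y
  let _ : NormedCommRing S := { (inferInstance : NormedRing S), (inferInstance : CommRing S) with }
  let y' : S := ⟨y, Algebra.elemental.self_mem ℝ y⟩
  have h := congrArg S.val (exp_logTaylor_of_pow_eq_zero_of_comm (y := y') (Subtype.ext hy))
  rwa [map_exp_of_mem_ball (𝕂 := ℝ) S.val continuous_subtype_val _
    ((expSeries_radius_eq_top ℝ S).symm ▸ edist_lt_top _ _), map_logTaylor, map_add, map_one] at h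

end ExpLogTaylor

theorem Matrix.exp_logTaylor_of_pow_eq_zero {n : Type*} [Fintype n] [DecidableEq n] {M : ℕ}
    {Y : Matrix n n ℝ} (hY : Y ^ (M + 1) = 0) : exp (logTaylor M Y) = 1 + Y :=
  open scoped Norms.Operator in _root_.exp_logTaylor_of_pow_eq_zero hY

section Rotation

local notation "toMatrix" => Algebra.leftMulMatrix Complex.basisOneI

theorem leftMulMatrix_basisOneI_mk (a b : ℝ) :
    toMatrix ⟨a, b⟩ = a • (1 : Matrix (Fin 2) (Fin 2) ℝ) + !![0, -b; b, 0] := by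
  rw [Algebra.leftMulMatrix_complex]
  ext i j
  fin_cases i <;> fin_cases j <;> simp

theorem rotMat_eq_leftMulMatrix (θ : ℝ) : rotMat θ = toMatrix (Complex.exp (θ * Complex.I)) := by
  rw [Algebra.leftMulMatrix_complex, Complex.exp_ofReal_mul_I_re, Complex.exp_ofReal_mul_I_im,
    rotMat]

theorem rotMat_inv (θ : ℝ) : (rotMat θ)⁻¹ = rotMat (-θ) := by
  refine inv_eq_right_inv ?_
  rw [rotMat_eq_leftMulMatrix, rotMat_eq_leftMulMatrix, ← map_mul, Complex.ofReal_neg, neg_mul,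
    ← Complex.exp_add, add_neg_cancel, Complex.exp_zero, map_one]

theorem commute_smul_one_add_rotMat (a θ ψ : ℝ) :
    Commute (a • (1 : Matrix (Fin 2) (Fin 2) ℝ) + !![0, -θ; θ, 0]) (rotMat ψ) := by
  rw [← leftMulMatrix_basisOneI_mk, rotMat_eq_leftMulMatrix]
  exact (Commute.all _ _).map _

theorem exp_log_smul_one_add {r : ℝ} (hr : 0 < r) (θ : ℝ) :
    exp (Real.log r • (1 : Matrix (Fin 2) (Fin 2) ℝ) + !![0, -θ; θ, 0]) = r • rotMat θ := by
  have hcont : Continuous toMatrix :=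
    LinearMap.continuous_of_finiteDimensional (toMatrix).toLinearMap
  rw [← leftMulMatrix_basisOneI_mk]
  refine (open scoped Norms.Operator in (map_exp _ hcont _).symm).trans ?_
  rw [← Complex.exp_eq_exp_ℂ,
    show (⟨Real.log r, θ⟩ : ℂ) = Real.log r + θ * Complex.I by apply Complex.ext <;> simp,
    Complex.exp_add, ← Complex.ofReal_exp, Real.exp_log hr, ← Complex.real_smul, map_smul,
    rotMat_eq_leftMulMatrix]

end Rotation

section Blocks

theorem Matrix.pow_apply_eq_zero_of_lt_add {n R : Type*} [Fintype n] [DecidableEq n] [Semiring R]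
    {A : Matrix n n R} (f : n → ℕ) (hA : ∀ i j, f j < f i + 1 → A i j = 0) (k : ℕ) :
    ∀ i j, f j < f i + k → (A ^ k) i j = 0 := by
  induction k with
  | zero => exact fun i j hij => one_apply_ne fun h => by simp [h] at hij
  | succ k ih =>
    intro i j hij
    rw [pow_succ, mul_apply]
    refine sum_eq_zero fun b _ => ?_
    by_cases hb : f b < f i + k
    · rw [ih i b hb, zero_mul]
    · rw [hA b j (by omega), mul_zero]

theorem blockSuperDiag2_pow_self (m : ℕ) (A : Matrix (Fin 2) (Fin 2) ℝ) :
    blockSuperDiag2 m A ^ m = 0 := by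
  ext p q
  refine pow_apply_eq_zero_of_lt_add (fun p => p.1) (fun p q h => ?_) m p q (by omega)
  simp [blockSuperDiag2, show (p.1 : ℕ) + 1 ≠ q.1 by omega]

def shiftMat (m : ℕ) : Matrix (Fin m) (Fin m) ℝ :=
  of fun i j => if (i : ℕ) + 1 = j then 1 else 0

theorem blockDiag2_eq_kronecker (m : ℕ) (A : Matrix (Fin 2) (Fin 2) ℝ) :
    blockDiag2 m A = (1 : Matrix (Fin m) (Fin m) ℝ) ⊗ₖ A := by
  ext p q
  simp only [blockDiag2, of_apply, kroneckerMap_apply, one_apply]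
  split <;> simp

theorem blockSuperDiag2_eq_kronecker (m : ℕ) (A : Matrix (Fin 2) (Fin 2) ℝ) :
    blockSuperDiag2 m A = shiftMat m ⊗ₖ A := by
  ext p q
  simp only [blockSuperDiag2, shiftMat, of_apply, kroneckerMap_apply]
  split <;> simp

theorem commute_blockDiag2_blockSuperDiag2 {m : ℕ} {A B : Matrix (Fin 2) (Fin 2) ℝ}
    (h : Commute A B) : Commute (blockDiag2 m A) (blockSuperDiag2 m B) := by
  rw [blockDiag2_eq_kronecker, blockSuperDiag2_eq_kronecker, Commute, SemiconjBy,
    ← mul_kronecker_mul, ← mul_kronecker_mul, one_mul, mul_one, h.eq]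

noncomputable def blockDiag2AlgHom (m : ℕ) :
    Matrix (Fin 2) (Fin 2) ℝ →ₐ[ℝ] Matrix (Fin m × Fin 2) (Fin m × Fin 2) ℝ :=
  (kroneckerAlgEquiv (Fin m) (Fin 2) ℝ).toAlgHom.comp Algebra.TensorProduct.includeRight

theorem blockDiag2AlgHom_apply (m : ℕ) (A : Matrix (Fin 2) (Fin 2) ℝ) :
    blockDiag2AlgHom m A = blockDiag2 m A := by
  simp [blockDiag2AlgHom, blockDiag2_eq_kronecker]

theorem exp_blockDiag2 (m : ℕ) (A : Matrix (Fin 2) (Fin 2) ℝ) :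
    exp (blockDiag2 m A) = blockDiag2 m (exp A) := by
  have hcont : Continuous (blockDiag2AlgHom m) :=
    LinearMap.continuous_of_finiteDimensional (blockDiag2AlgHom m).toLinearMap
  rw [← blockDiag2AlgHom_apply, ← blockDiag2AlgHom_apply]
  exact open scoped Norms.Operator in (map_exp _ hcont A).symm

end Blocks

theorem exp_modified_jordan_block_complex_pair_general (m : ℕ)
    (r T θ ε' : ℝ) (hr : 0 < r) (hT : 0 < T)
    (𝒩 K : Matrix (Fin m × Fin 2) (Fin m × Fin 2) ℝ)
    (h𝒩 : 𝒩 = blockSuperDiag2 m (rotMat θ)⁻¹)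
    (hK : K = (1 / T) • ((Real.log r) • (1 : Matrix (Fin m × Fin 2) (Fin m × Fin 2) ℝ) +
      blockDiag2 m !![0, -θ; θ, 0] +
      ∑ k ∈ Finset.Icc 1 (2 * m - 2), ((-1 : ℝ) ^ (k + 1) / (k : ℝ) * ε' ^ k) • 𝒩 ^ k)) :
    exp (T • K) =
      blockDiag2 m (r • rotMat θ) *
        ((1 : Matrix (Fin m × Fin 2) (Fin m × Fin 2) ℝ) + ε' • 𝒩) := by
  set G : Matrix (Fin 2) (Fin 2) ℝ := Real.log r • 1 + !![0, -θ; θ, 0]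
  have hG : blockDiag2 m G = Real.log r • 1 + blockDiag2 m !![0, -θ; θ, 0] := by
    simp only [G, ← blockDiag2AlgHom_apply, map_add, map_smul, map_one]
  have hTK : T • K = blockDiag2 m G + logTaylor (2 * m - 2) (ε' • 𝒩) := by
    rw [hK, smul_smul, mul_one_div_cancel hT.ne', one_smul, logTaylor_smul, hG]
  have hG𝒩 : Commute (blockDiag2 m G) (ε' • 𝒩) := by
    rw [h𝒩, rotMat_inv]
    exact (commute_blockDiag2_blockSuperDiag2 (commute_smul_one_add_rotMat _ _ _)).smul_right ε'
  have h𝒩_nil : (ε' • 𝒩) ^ (2 * m - 2 + 1) = 0 := by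
    have h𝒩m : 𝒩 ^ m = 0 := h𝒩 ▸ blockSuperDiag2_pow_self m _
    rw [smul_pow, pow_eq_zero_of_le (show m ≤ 2 * m - 2 + 1 by omega) h𝒩m, smul_zero]
  rw [hTK, exp_add_of_commute _ _ (hG𝒩.logTaylor_right _), exp_blockDiag2,
    exp_log_smul_one_add hr, Matrix.exp_logTaylor_of_pow_eq_zero h𝒩_nil]

/-- Real logarithm of the modified real Jordan block for a complex conjugate pair
`r e^{±iθ}`: with `Θ = [[0,-θ],[θ,0]]` and `𝒩` the nilpotent matrix with blocks `R(θ)⁻¹`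
on the block superdiagonal,
`K = (1/T)((ln r) I + blockdiag(Θ,…,Θ) + ∑_{k=1}^{2m-2}((-1)^{k+1}/k)(ε')^k 𝒩^k)`
satisfies `exp (K T) = 𝓡 (I + ε' 𝒩)` with `𝓡 = blockdiag(r R(θ),…,r R(θ))`. -/
theorem exp_modified_jordan_block_complex_pair (m : ℕ) (hm : 1 ≤ m)
    (r T θ ε' : ℝ) (hr : 0 < r) (hT : 0 < T) (hθ : θ ∈ Set.Ioo 0 (2 * Real.pi))
    (hε' : 0 < ε')
    (𝒩 K : Matrix (Fin m × Fin 2) (Fin m × Fin 2) ℝ)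
    (h𝒩 : 𝒩 = blockSuperDiag2 m (rotMat θ)⁻¹)
    (hK : K = (1 / T) • ((Real.log r) • (1 : Matrix (Fin m × Fin 2) (Fin m × Fin 2) ℝ) +
      blockDiag2 m !![0, -θ; θ, 0] +
      ∑ k ∈ Finset.Icc 1 (2 * m - 2), ((-1 : ℝ) ^ (k + 1) / (k : ℝ) * ε' ^ k) • 𝒩 ^ k)) :
    exp (T • K) =
      blockDiag2 m (r • rotMat θ) *
        ((1 : Matrix (Fin m × Fin 2) (Fin m × Fin 2) ℝ) + ε' • 𝒩) :=
  exp_modified_jordan_block_complex_pair_general m r T θ ε' hr hT 𝒩 K h𝒩 hK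
end
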